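/- arXiv:math/0604622 — 5 statements merged into one kernel-verified Lean document; each statement's English description precedes it below -/
import Mathlib

section
/- Let ρ ∈ ℂ with Re(ρ) < 0 and Im(ρ) = N/(2π) for an even natural number N, and define q^z = exp(z/ρ). Then the formula χ(q^n q^{it}, q^{n'} q^{it'}) = exp(i(nn' − tt') Im(ρ⁻¹)) exp(i(nt' + n't) Re(ρ⁻¹)) is well-defined: if q^n q^{it} = q^m q^{is} and q^{n'} q^{it'} = q^{m'} q^{is'} with n,m,n',m' ∈ ℤ and t,s,t',s' ∈ ℝ, then the two expressions agree. -/
open Complex Real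

/-- Well-definedness of the bicharacter formula: if two representations
`q^n q^{it} = exp((n+it)/ρ)` of elements of `Γ_q` agree, then the formula
`χ(q^n q^{it}, q^{n'} q^{it'}) = exp(i(nn'−tt')Im(ρ⁻¹)) exp(i(nt'+n't)Re(ρ⁻¹))`
gives the same value. -/
theorem stmt1 (ρ : ℂ) (N : ℕ) (hre : ρ.re < 0) (hN : Even N) (hN0 : 0 < N)
    (him : ρ.im = N / (2 * π))
    (n m n' m' : ℤ) (t s t' s' : ℝ)
    (h1 : Complex.exp (((n : ℂ) + I * t) / ρ) = Complex.exp (((m : ℂ) + I * s) / ρ))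
    (h2 : Complex.exp (((n' : ℂ) + I * t') / ρ) = Complex.exp (((m' : ℂ) + I * s') / ρ)) :
    Complex.exp (I * (((n : ℂ) * n' - t * t') * (ρ⁻¹).im)) *
        Complex.exp (I * (((n : ℂ) * t' + (n' : ℂ) * t) * (ρ⁻¹).re)) =
      Complex.exp (I * (((m : ℂ) * m' - s * s') * (ρ⁻¹).im)) *
        Complex.exp (I * (((m : ℂ) * s' + (m' : ℂ) * s) * (ρ⁻¹).re)) := by
  obtain ⟨k, hk⟩ := Complex.exp_eq_exp_iff_exists_int.mp h1
  obtain ⟨k', hk'⟩ := Complex.exp_eq_exp_iff_exists_int.mp h2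
  -- key complex identity
  have hkey : ((n : ℂ) + I * t) * ((n' : ℂ) + I * t') / ρ
      = ((m : ℂ) + I * s) * ((m' : ℂ) + I * s') / ρ
        + ((k : ℂ) * ((n' : ℂ) + I * t') + (k' : ℂ) * ((m : ℂ) + I * s)) * (2 * π * I) := by
    linear_combination ((n' : ℂ) + I * t') * hk + ((m : ℂ) + I * s) * hk'
  have E := congrArg Complex.im hkey
  simp only [div_eq_mul_inv, Complex.add_im, Complex.mul_im, Complex.mul_re,
    Complex.add_re, Complex.I_re, Complex.I_im, Complex.ofReal_re, Complex.ofReal_im,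
    Complex.intCast_re, Complex.intCast_im, Complex.re_ofNat, Complex.im_ofNat] at E
  rw [← Complex.exp_add, ← Complex.exp_add]
  refine Complex.exp_eq_exp_iff_exists_int.mpr ⟨k * n' + k' * m, ?_⟩
  have E' : ((((n : ℝ) * n' - t * t') * (ρ⁻¹).im + ((n : ℝ) * t' + (n' : ℝ) * t) * (ρ⁻¹).re : ℝ) : ℂ)
      = ((((m : ℝ) * m' - s * s') * (ρ⁻¹).im + ((m : ℝ) * s' + (m' : ℝ) * s) * (ρ⁻¹).re
          + ((k : ℝ) * n' + (k' : ℝ) * m) * (2 * π) : ℝ) : ℂ) := by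
    norm_cast
    push_cast
    linear_combination E
  push_cast at E' ⊢
  linear_combination I * E'
end

section
/- With χ defined on Γ_q × Γ_q by χ(q^n q^{it}, q^{n'} q^{it'}) = exp(i(nn'−tt')Im(ρ⁻¹)) exp(i(nt'+n't)Re(ρ⁻¹)), χ is a symmetric bicharacter: χ(γ,γ') = χ(γ',γ) and χ(γ,γ'γ'') = χ(γ,γ')χ(γ,γ'') for all γ,γ',γ'' ∈ Γ_q, and moreover χ(γ,q) = Phase(γ) (i.e. γ/|γ|) and χ(γ,q^{it}) = |γ|^{it}. -/
open Complex Real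

/-- The bicharacter `χ(q^n q^{it}, q^{n'} q^{it'})`. -/
noncomputable def chi (ρ : ℂ) (n n' : ℤ) (t t' : ℝ) : ℂ :=
  Complex.exp (I * (((n : ℂ) * n' - t * t') * (ρ⁻¹).im)) *
    Complex.exp (I * (((n : ℂ) * t' + (n' : ℂ) * t) * (ρ⁻¹).re))

/-- `χ` is a symmetric bicharacter on `Γ_q` with `χ(γ, q) = Phase γ` and
`χ(γ, q^{it'}) = |γ|^{it'}`. -/
theorem stmt2 (ρ : ℂ) (N : ℕ) (hre : ρ.re < 0) (hN : Even N) (hN0 : 0 < N)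
    (him : ρ.im = N / (2 * π)) (q : ℂ) (hq : q = Complex.exp ρ⁻¹) :
    (∀ (n n' : ℤ) (t t' : ℝ), chi ρ n n' t t' = chi ρ n' n t' t) ∧
    (∀ (n n' n'' : ℤ) (t t' t'' : ℝ),
      chi ρ n (n' + n'') t (t' + t'') = chi ρ n n' t t' * chi ρ n n'' t t'') ∧
    (∀ (n : ℤ) (t : ℝ),
      chi ρ n 1 t 0 =
        Complex.exp (((n : ℂ) + I * t) / ρ) /
          ‖Complex.exp (((n : ℂ) + I * t) / ρ)‖) ∧
    (∀ (n : ℤ) (t t' : ℝ),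
      chi ρ n 0 t t' =
        ((‖Complex.exp (((n : ℂ) + I * t) / ρ)‖ : ℂ)) ^ (I * t')) := by
  have hre' : ∀ (n : ℤ) (t : ℝ), (((n : ℂ) + I * t) / ρ).re
      = n * (ρ⁻¹).re - t * (ρ⁻¹).im := by
    intro n t
    rw [div_eq_mul_inv]
    simp [Complex.add_re, Complex.mul_re, Complex.mul_im]
  have him' : ∀ (n : ℤ) (t : ℝ), (((n : ℂ) + I * t) / ρ).im
      = n * (ρ⁻¹).im + t * (ρ⁻¹).re := by
    intro n t
    rw [div_eq_mul_inv]
    simp [Complex.add_im, Complex.mul_re, Complex.mul_im]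
  refine ⟨?_, ?_, ?_, ?_⟩
  · intro n n' t t'
    unfold chi; ring_nf
  · intro n n' n'' t t' t''
    unfold chi
    rw [← Complex.exp_add, ← Complex.exp_add, ← Complex.exp_add, ← Complex.exp_add]
    push_cast
    ring_nf
  · intro n t
    set z : ℂ := ((n : ℂ) + I * t) / ρ with hzdef
    have h1 : Complex.exp z = Real.exp z.re * Complex.exp (z.im * I) := by
      conv_lhs => rw [← Complex.re_add_im z]
      rw [Complex.exp_add, Complex.ofReal_exp]
    have habs : (‖Complex.exp z‖ : ℂ) = (Real.exp z.re : ℂ) := by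
      rw [Complex.norm_exp]
    have hne : ((Real.exp z.re : ℝ) : ℂ) ≠ 0 := by exact_mod_cast Real.exp_ne_zero _
    rw [habs, h1]
    rw [show ((Real.exp z.re : ℂ) * Complex.exp (z.im * I) / (Real.exp z.re : ℂ))
        = Complex.exp (z.im * I) from by field_simp]
    have hzim : ((z.im : ℝ) : ℂ) = (n : ℂ) * (ρ⁻¹).im + (t : ℂ) * (ρ⁻¹).re := by
      rw [hzdef, him' n t]; push_cast; ring
    rw [hzim]
    unfold chi
    rw [← Complex.exp_add]
    push_cast
    ring_nf
  · intro n t t'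
    have habs : ‖Complex.exp (((n : ℂ) + I * t) / ρ)‖
        = Real.exp ((((n : ℂ) + I * t) / ρ).re) := Complex.norm_exp _
    rw [habs]
    have hne : ((Real.exp ((((n : ℂ) + I * t) / ρ).re) : ℝ) : ℂ) ≠ 0 := by
      exact_mod_cast Real.exp_ne_zero _
    rw [Complex.cpow_def_of_ne_zero hne]
    rw [← Complex.ofReal_log (Real.exp_pos _).le, Real.log_exp, hre' n t]
    unfold chi
    rw [← Complex.exp_add]
    push_cast
    ring_nf
end

section
/- For any complex ρ with Re(ρ) < 0, the series ∑_{k∈ℤ} (s(k) + tanh((2k+n)/(2ρ))) converges absolutely and its sum equals −(n−1) for every integer n, where s(k) = 1 for k ≥ 0 and s(k) = −1 for k < 0, and tanh is evaluated avoiding poles (assume (2k+n)/(2ρ) is never a pole of tanh, which holds since Re(ρ) < 0 ensures Re((2k+n)/(2ρ)) ≠ 0 for 2k+n ≠ 0; for 2k+n = 0 the term is tanh(0) = 0 plus s(k)). -/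
open Complex

/-- The sign function `s(k) = 1` for `k ≥ 0`, `s(k) = −1` for `k < 0`. -/
noncomputable def sgn' (k : ℤ) : ℂ := if 0 ≤ k then 1 else -1

/-!
Convergence: `1 + tanh z = 2 e^{2z} / (e^{2z} + 1)` is `O(e^{2z})`, which decays geometrically
along `z = k/ρ + n/(2ρ)` as `k → +∞`; the tail `k → -∞` is the same by oddness of `tanh`.

Value: the reflection `k ↦ -n - k` maps `(2k + n)/(2ρ)` to its negative, so adding the series to
its reflection cancels every `tanh` and leaves `∑ₖ (s(k) + s(-n - k))`, a finitely supported sum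
equal to `-2(n - 1)`.
-/

theorem Complex.one_add_tanh {z : ℂ} (h : exp (2 * z) + 1 ≠ 0) :
    1 + tanh z = 2 * exp (2 * z) / (exp (2 * z) + 1) := by
  have hu : exp z ≠ 0 := exp_ne_zero z
  rw [show exp (2 * z) = exp z ^ 2 by rw [← exp_nat_mul]; norm_num] at h ⊢
  have hcosh : exp z + (exp z)⁻¹ ≠ 0 := fun h0 => h (by field_simp at h0; linear_combination h0)
  rw [tanh_eq_sinh_div_cosh, sinh, cosh, exp_neg, div_div_div_cancel_right₀ two_ne_zero]
  field_simp
  ring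

theorem Complex.norm_one_add_tanh_le {z : ℂ} (h : ‖exp (2 * z)‖ ≤ 1 / 2) :
    ‖1 + tanh z‖ ≤ 4 * ‖exp (2 * z)‖ := by
  set w := exp (2 * z)
  have hw : 1 / 2 ≤ ‖w + 1‖ := by
    have := norm_sub_norm_le (1 : ℂ) (-w)
    rw [sub_neg_eq_add, add_comm, norm_one, norm_neg] at this
    linarith
  rw [one_add_tanh (norm_pos_iff.mp (by linarith)), norm_div, norm_mul, Complex.norm_two]
  calc 2 * ‖w‖ / ‖w + 1‖ ≤ 2 * ‖w‖ / (1 / 2) := by gcongr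
    _ = 4 * ‖w‖ := by ring

lemma summable_one_add_tanh_mul_add {a : ℂ} (ha : a.re < 0) (b : ℂ) :
    Summable fun m : ℕ => 1 + tanh (a * m + b) := by
  set g : ℕ → ℝ := fun m => ‖exp (2 * (a * m + b))‖
  have hg : g = fun m => Real.exp (2 * b.re) * Real.exp (2 * a.re) ^ m := by
    ext m
    rw [← Real.exp_nat_mul, ← Real.exp_add]
    simp only [g, norm_exp, mul_re, add_re, natCast_re, natCast_im, re_ofNat, im_ofNat]
    ring_nf
  have hsum : Summable g := hg ▸ (summable_geometric_of_lt_one (Real.exp_pos _).le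
    (Real.exp_lt_one_iff.mpr (by linarith))).mul_left _
  refine Summable.of_norm_bounded_eventually_nat (hsum.mul_left 4) ?_
  filter_upwards [hsum.tendsto_atTop_zero.eventually (eventually_le_nhds one_half_pos)]
    with m hm
  exact norm_one_add_tanh_le hm

lemma summable_sgn'_add_tanh_mul_add {a : ℂ} (ha : a.re < 0) (b : ℂ) :
    Summable fun k : ℤ => sgn' k + tanh (a * k + b) := by
  refine .of_nat_of_neg_add_one ?_ ?_
  · simpa [sgn'] using summable_one_add_tanh_mul_add ha b
  · refine (summable_one_add_tanh_mul_add ha (a - b)).neg.congr fun m => ?_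
    have harg : a * ((-(m + 1) : ℤ) : ℂ) + b = -(a * m + (a - b)) := by push_cast; ring
    rw [harg, tanh_neg, sgn', if_neg (by omega)]
    ring

lemma sgn'_sub_sgn'_sub_one (k : ℤ) : sgn' k - sgn' (k - 1) = if k = 0 then 2 else 0 := by
  unfold sgn'
  split_ifs <;> (try omega) <;> norm_num

lemma hasSum_sgn'_add_sgn'_sub (j : ℤ) :
    HasSum (fun k => sgn' k + sgn' (j - k)) (2 * (j + 1)) := by
  have hjump : HasSum (fun k => sgn' k - sgn' (k - 1)) 2 := by
    simpa only [sgn'_sub_sgn'_sub_one] using hasSum_ite_eq (0 : ℤ) (2 : ℂ)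
  have hstep (j : ℤ) (c : ℂ) : HasSum (fun k => sgn' k + sgn' (j - k)) c ↔
      HasSum (fun k => sgn' k + sgn' (j + 1 - k)) (c + 2) := by
    have hsplit : (fun k => sgn' k + sgn' (j + 1 - k)) =
        fun k => (sgn' (k - 1) + sgn' (j - (k - 1))) + (sgn' k - sgn' (k - 1)) := by
      ext k
      ring_nf
    rw [hsplit, ← (Equiv.subRight (1 : ℤ)).hasSum_iff]
    exact ⟨fun h => h.add hjump, fun h => by simpa [Function.comp_def] using h.sub hjump⟩
  induction j using Int.induction_on with
  | zero =>
    convert hasSum_ite_eq (0 : ℤ) (2 : ℂ) using 1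
    · ext k
      unfold sgn'
      split_ifs <;> (try omega) <;> norm_num
    · norm_num
  | succ i ih =>
    convert (hstep i _).mp ih using 1
    push_cast
    ring
  | pred i ih =>
    rw [hstep, sub_add_cancel]
    convert ih using 1
    push_cast
    ring

/-- `∑_{k∈ℤ} (s(k) + tanh((2k+n)/(2ρ))) = −(n−1)` for `Re ρ < 0`
(the `HasSum` includes the (absolute) convergence of the series). -/
theorem stmt8 (ρ : ℂ) (h : ρ.re < 0) (n : ℤ) :
    HasSum (fun k : ℤ => sgn' k + Complex.tanh ((2 * (k : ℂ) + n) / (2 * ρ)))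
      (-((n : ℂ) - 1)) := by
  have hρ : ρ⁻¹.re < 0 := by
    rw [inv_re]
    exact div_neg_of_neg_of_pos h (normSq_pos.mpr fun h0 => by simp [h0] at h)
  have harg (k : ℂ) : (2 * k + n) / (2 * ρ) = ρ⁻¹ * k + n / (2 * ρ) := by ring
  set f := fun k : ℤ => sgn' k + tanh ((2 * (k : ℂ) + n) / (2 * ρ))
  obtain ⟨S, hS⟩ : Summable f := by
    simpa only [f, harg] using summable_sgn'_add_tanh_mul_add hρ (n / (2 * ρ))
  have hpair (k : ℤ) : f k + f (-n - k) = sgn' k + sgn' (-n - k) := by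
    have hodd : (2 * ((-n - k : ℤ) : ℂ) + n) / (2 * ρ) = -((2 * (k : ℂ) + n) / (2 * ρ)) := by
      push_cast; ring
    simp only [f, hodd, tanh_neg]
    ring
  have h2S : HasSum (fun k => sgn' k + sgn' (-n - k)) (S + S) := by
    have hreflect := (Equiv.subLeft (-n)).hasSum_iff.mpr hS
    simpa only [Function.comp_apply, Equiv.subLeft_apply, hpair] using hS.add hreflect
  have hS2 := h2S.unique (hasSum_sgn'_add_sgn'_sub (-n))
  convert hS
  push_cast at hS2
  linear_combination -hS2 / 2
end

section
/- For ρ ≠ 0 and x ∈ ℂ with x ≠ 0 and cosh(x/(2ρ)) ≠ 0, setting λ_p = 2πρ(p+1/2) + ix, we have ∑_{p∈ℤ} 1/(λ_p(λ_p − ix)) = (1/(2ρx))·tanh(x/(2ρ)). -/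
open Complex Real

lemma halfint_ne (p : ℤ) : ((p:ℂ) + 1/2) ≠ 0 := by
  intro hp
  have h1 : ((2*p+1 : ℤ) : ℂ) = 0 := by push_cast; linear_combination 2*hp
  have := Int.cast_injective (α := ℂ) (h1.trans Int.cast_zero.symm)
  omega

lemma coeff_comp (s : ℂ) (hps : ∀ p : ℤ, (p:ℂ) + s ≠ 0) (A B : ℂ) (p : ℤ) :
    haveI : Fact ((0:ℝ) < 1) := ⟨one_pos⟩
    fourierCoeff (AddCircle.liftIco 1 0 (fun u : ℝ =>
        A * Complex.exp (-(2*π*I*s) * u) + B * Complex.exp (-(π*I) * u))) p =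
      A * (Complex.exp (-(2*π*I*s)) - 1) / (-(2*π*I) * ((p:ℂ) + s)) +
      B * (-2) / (-(2*π*I) * ((p:ℂ) + 1/2)) := by
  haveI : Fact ((0:ℝ) < 1) := ⟨one_pos⟩
  have hπ : (π:ℂ) ≠ 0 := Complex.ofReal_ne_zero.mpr Real.pi_ne_zero
  have hI : (2*(π:ℂ)*I) ≠ 0 := by simp [hπ, I_ne_zero]
  have hc1 : -(2*(π:ℂ)*I) * ((p:ℂ) + s) ≠ 0 := mul_ne_zero (neg_ne_zero.mpr hI) (hps p)
  have hc2 : -(2*(π:ℂ)*I) * ((p:ℂ) + 1/2) ≠ 0 :=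
    mul_ne_zero (neg_ne_zero.mpr hI) (halfint_ne p)
  have key : ∀ (a b c : ℂ), Complex.exp a * (A * Complex.exp b + B * Complex.exp c)
      = A * Complex.exp (a+b) + B * Complex.exp (a+c) := by
    intro a b c; rw [Complex.exp_add, Complex.exp_add]; ring
  rw [fourierCoeff_liftIco_eq, fourierCoeffOn_eq_integral]
  simp only [smul_eq_mul, fourier_coe_apply, zero_add, sub_zero, zero_sub, one_smul]
  have hint : ∀ y ∈ Set.uIcc (0:ℝ) 1,
      Complex.exp (2*π*I*(-p:ℤ)*y/((1:ℝ):ℂ)) * (A * Complex.exp (-(2*π*I*s) * y) + B * Complex.exp (-(π*I) * y)) =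
      A * Complex.exp ((-(2*π*I) * ((p:ℂ) + s)) * y) + B * Complex.exp ((-(2*π*I) * ((p:ℂ) + 1/2)) * y) := by
    intro y _
    rw [key]
    norm_num
    ring_nf
  rw [intervalIntegral.integral_congr hint]
  rw [intervalIntegral.integral_add ((Continuous.intervalIntegrable (by fun_prop) _ _))
      ((Continuous.intervalIntegrable (by fun_prop) _ _)),
    intervalIntegral.integral_const_mul, intervalIntegral.integral_const_mul,
    integral_exp_mul_complex hc1, integral_exp_mul_complex hc2]
  have e1 : Complex.exp (-(2 * ↑π * I * ((p:ℂ) + s))) = Complex.exp (-(2*π*I*s)) := by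
    rw [show -(2 * (π:ℂ) * I * (↑p + s)) = ((-p : ℤ):ℂ) * (2*π*I) + -(2*π*I*s) by push_cast; ring,
      Complex.exp_add, Complex.exp_int_mul_two_pi_mul_I, one_mul]
  have e2 : Complex.exp (-(2 * ↑π * I * ((p:ℂ) + 1/2))) = -1 := by
    rw [show -(2 * (π:ℂ) * I * (↑p + 1/2)) = ((-p : ℤ):ℂ) * (2*π*I) + -(π*I) by push_cast; ring,
      Complex.exp_add, Complex.exp_int_mul_two_pi_mul_I, one_mul, Complex.exp_neg,
      Complex.exp_pi_mul_I]
    norm_num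
  norm_num
  rw [e1, e2]
  field_simp
  ring

lemma sum_summable (s : ℂ) : Summable (fun p : ℤ => 1/(((p:ℂ)+1/2)*((p:ℂ)+s))) := by
  apply Summable.of_norm_bounded_eventually (g := fun p : ℤ => 4 * (1/(p:ℝ)^2))
    ((summable_one_div_int_pow.mpr one_lt_two).mul_left 4)
  rw [Filter.eventually_cofinite]
  apply Set.Finite.subset (Set.finite_Icc (-(⌈2*‖s‖+2⌉) : ℤ) ⌈2*‖s‖+2⌉)
  intro p hp
  simp only [Set.mem_setOf_eq, not_le] at hp
  by_contra hmem
  simp only [Set.mem_Icc, not_and_or, not_le] at hmem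
  -- from hmem : |(p:ℝ)| large
  have hR : (0:ℝ) ≤ 2*‖s‖+2 := by positivity
  have hs0 : (0:ℝ) ≤ ‖s‖ := norm_nonneg s
  have hpr : 2*‖s‖+2 ≤ |(p:ℝ)| := by
    rcases hmem with hm | hm
    · have : (p:ℝ) < -(2*‖s‖+2) := by
        have := Int.lt_iff_add_one_le.mpr hm  -- -⌈R⌉ > p → p + 1 ≤ -⌈R⌉
        have h2 : ((p:ℤ):ℝ) ≤ (-(⌈2*‖s‖+2⌉:ℤ) : ℝ) - 1 := by exact_mod_cast by omega
        have h3 : (2*‖s‖+2 : ℝ) ≤ (⌈2*‖s‖+2⌉ : ℝ) := Int.le_ceil _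
        push_cast at h2
        linarith
      calc 2*‖s‖+2 ≤ -((p:ℝ)) := by linarith
        _ ≤ |(p:ℝ)| := by rw [abs_eq_max_neg]; exact le_max_right _ _
    · have h2 : ((⌈2*‖s‖+2⌉:ℤ) : ℝ) + 1 ≤ (p:ℝ) := by exact_mod_cast by omega
      have h3 : (2*‖s‖+2 : ℝ) ≤ (⌈2*‖s‖+2⌉ : ℝ) := Int.le_ceil _
      calc 2*‖s‖+2 ≤ (p:ℝ) := by linarith
        _ ≤ |(p:ℝ)| := le_abs_self _
  set r := |(p:ℝ)| with hr
  have hnormp : ‖((p:ℤ):ℂ)‖ = r := by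
    rw [show ((p:ℤ):ℂ) = ((p:ℝ):ℂ) by push_cast; ring, Complex.norm_real]; rfl
  have h1 : r/2 ≤ ‖(p:ℂ) + 1/2‖ := by
    have := norm_sub_norm_le ((p:ℂ)) (-(1/2) : ℂ)
    rw [sub_neg_eq_add, norm_neg, hnormp] at this
    have hh : ‖(1/2 : ℂ)‖ ≤ 1 := by simp; norm_num
    linarith
  have h2 : r/2 ≤ ‖(p:ℂ) + s‖ := by
    have := norm_sub_norm_le ((p:ℂ)) (-s : ℂ)
    rw [sub_neg_eq_add, norm_neg, hnormp] at this
    linarith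
  have hrpos : 0 < r := by linarith
  have hpne : ((p:ℝ))^2 ≠ 0 := by
    have : r ≠ 0 := ne_of_gt hrpos
    simpa [hr, abs_eq_zero] using fun h => this (by simp [hr, h])
  have heq : ‖1/(((p:ℂ)+1/2)*((p:ℂ)+s))‖ = (‖(p:ℂ)+1/2‖ * ‖(p:ℂ)+s‖)⁻¹ := by
    rw [one_div, norm_inv, norm_mul]
  rw [heq] at hp
  have hle : (r/2)*(r/2) ≤ ‖(p:ℂ)+1/2‖ * ‖(p:ℂ)+s‖ :=
    mul_le_mul h1 h2 (by positivity) (norm_nonneg _)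
  have hmono : (‖(p:ℂ)+1/2‖ * ‖(p:ℂ)+s‖)⁻¹ ≤ ((r/2)*(r/2))⁻¹ :=
    inv_anti₀ (by positivity) hle
  have hr2 : r^2 = (p:ℝ)^2 := sq_abs _
  have hfinal : ((r/2)*(r/2))⁻¹ = 4*(1/(p:ℝ)^2) := by
    rw [← hr2]
    have : r ≠ 0 := ne_of_gt hrpos
    field_simp
    ring
  linarith

lemma keySum (s : ℂ) (hs : s - 1/2 ≠ 0) (hE : Complex.exp (-(2*π*I*s)) ≠ 1) :
    HasSum (fun p : ℤ => 1/(((p:ℂ)+1/2)*((p:ℂ)+s)))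
      ((π*I/(s-1/2)) * (Complex.exp (-(2*π*I*s)) + 1)/(Complex.exp (-(2*π*I*s)) - 1)) := by
  haveI : Fact ((0:ℝ) < 1) := ⟨one_pos⟩
  have hπ : (π:ℂ) ≠ 0 := Complex.ofReal_ne_zero.mpr Real.pi_ne_zero
  set E := Complex.exp (-(2*π*I*s)) with hEdef
  have hE1 : E - 1 ≠ 0 := sub_ne_zero.mpr hE
  have hps : ∀ p : ℤ, (p:ℂ) + s ≠ 0 := by
    intro p hp
    apply hE
    have hsp : s = -(p:ℂ) := by linear_combination hp
    rw [hEdef, show -(2*(π:ℂ)*I*s) = ((p:ℤ):ℂ)*(2*π*I) by rw [hsp]; push_cast; ring,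
      Complex.exp_int_mul_two_pi_mul_I]
  set A : ℂ := 2*π*I/(s-1/2)/(E-1) with hA
  set B : ℂ := π*I/(s-1/2) with hB
  set g : ℝ → ℂ := fun u : ℝ =>
      A * Complex.exp (-(2*π*I*s) * u) + B * Complex.exp (-(π*I) * u) with hg
  have hπI : (π:ℂ)*I ≠ 0 := mul_ne_zero hπ I_ne_zero
  have h2πI : (2:ℂ)*(π:ℂ)*I ≠ 0 := by simpa [mul_assoc] using mul_ne_zero two_ne_zero hπI
  have hcont : Continuous (AddCircle.liftIco 1 0 g) := by
    apply AddCircle.liftIco_zero_continuous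
    · show A * Complex.exp (-(2*π*I*s) * ((0:ℝ):ℂ)) + B * Complex.exp (-((π:ℂ)*I) * ((0:ℝ):ℂ))
        = A * Complex.exp (-(2*π*I*s) * ((1:ℝ):ℂ)) + B * Complex.exp (-((π:ℂ)*I) * ((1:ℝ):ℂ))
      have e2 : Complex.exp (-((π:ℂ)*I)) = -1 := by
        rw [Complex.exp_neg, Complex.exp_pi_mul_I]; norm_num
      rw [Complex.ofReal_zero, Complex.ofReal_one, mul_zero, mul_zero, mul_one, mul_one,
        Complex.exp_zero, e2, ← hEdef]
      rw [hA, hB]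
      linear_combination (-(2:ℂ)*(π:ℂ)*I*(s-1/2)⁻¹) * (mul_inv_cancel₀ hE1)
    · apply Continuous.continuousOn; fun_prop
  set F : C(AddCircle 1, ℂ) := ⟨AddCircle.liftIco 1 0 g, hcont⟩ with hF
  have hcoeff : ∀ p : ℤ, fourierCoeff (⇑F) p = 1/(((p:ℂ)+1/2)*((p:ℂ)+s)) := by
    intro p
    have hcc := coeff_comp s hps A B p
    rw [← hEdef] at hcc
    show fourierCoeff (AddCircle.liftIco 1 0 g) p = _
    rw [hg, hcc, hA, hB]
    rw [div_add_div _ _ (mul_ne_zero (neg_ne_zero.mpr h2πI) (hps p))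
      (mul_ne_zero (neg_ne_zero.mpr h2πI) (halfint_ne p)),
      div_eq_div_iff (mul_ne_zero (mul_ne_zero (neg_ne_zero.mpr h2πI) (hps p))
        (mul_ne_zero (neg_ne_zero.mpr h2πI) (halfint_ne p)))
        (mul_ne_zero (halfint_ne p) (hps p))]
    linear_combination (-(4:ℂ)*(π:ℂ)^2*I^2*((p:ℂ)+1/2)^2*((p:ℂ)+s)*(s-1/2)⁻¹) * (mul_inv_cancel₀ hE1)
      + ((4:ℂ)*(π:ℂ)^2*I^2*((p:ℂ)+1/2)*((p:ℂ)+s)) * (mul_inv_cancel₀ hs)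
  have hsumm : Summable (fun p => fourierCoeff (⇑F) p) := by
    simp_rw [hcoeff]; exact sum_summable s
  have hpt := has_pointwise_sum_fourier_series_of_summable hsumm ((0:ℝ) : AddCircle (1:ℝ))
  have hF0 : F (↑(0:ℝ)) = A + B := by
    show AddCircle.liftIco 1 0 g (((0:ℝ) : ℝ) : AddCircle (1:ℝ)) = A + B
    rw [AddCircle.liftIco_zero_coe_apply (Set.mem_Ico.mpr ⟨le_refl (0:ℝ), zero_lt_one⟩)]
    show A * Complex.exp (-(2*π*I*s) * ((0:ℝ):ℂ)) + B * Complex.exp (-((π:ℂ)*I) * ((0:ℝ):ℂ)) = A + B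
    rw [Complex.ofReal_zero, mul_zero, mul_zero, Complex.exp_zero, mul_one, mul_one]
  have hfour : (fun p : ℤ => fourierCoeff (⇑F) p • fourier p ((0:ℝ) : AddCircle (1:ℝ)))
      = (fun p : ℤ => 1/(((p:ℂ)+1/2)*((p:ℂ)+s))) := by
    funext p
    have h1 : fourier p ((0:ℝ) : AddCircle (1:ℝ)) = 1 := by
      rw [fourier_coe_apply]; norm_num
    rw [h1, hcoeff p, smul_eq_mul, mul_one]
  rw [hF0, hfour] at hpt
  have hval : (π:ℂ)*I/(s-1/2) * (E+1)/(E-1) = A + B := by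
    rw [hA, hB]
    linear_combination ((π:ℂ)*I*(s-1/2)⁻¹) * (mul_inv_cancel₀ hE1)
  rw [hval]
  exact hpt

/-- With `λ_p = 2πρ(p+1/2) + ix`, `∑_{p∈ℤ} 1/(λ_p(λ_p − ix)) = tanh(x/(2ρ))/(2ρx)`. -/
theorem stmt12 (ρ x : ℂ) (hρ : ρ ≠ 0) (hx : x ≠ 0)
    (h : Complex.cosh (x / (2 * ρ)) ≠ 0) :
    HasSum
      (fun p : ℤ =>
        1 / ((2 * (π : ℂ) * ρ * ((p : ℂ) + 1 / 2) + I * x) *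
          ((2 * (π : ℂ) * ρ * ((p : ℂ) + 1 / 2) + I * x) - I * x)))
      (Complex.tanh (x / (2 * ρ)) / (2 * ρ * x)) := by
  have hπ : (π:ℂ) ≠ 0 := Complex.ofReal_ne_zero.mpr Real.pi_ne_zero
  set u : ℂ := x / (2*ρ) with hu
  set w : ℂ := Complex.exp u with hw
  have hwne : w ≠ 0 := Complex.exp_ne_zero u
  have hwinv : Complex.exp (-u) = w⁻¹ := by rw [Complex.exp_neg]
  have hcosh : Complex.cosh u = (w + w⁻¹)/2 := by rw [show Complex.cosh u = (Complex.exp u + Complex.exp (-u))/2 from rfl, hwinv]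
  have hsinh : Complex.sinh u = (w - w⁻¹)/2 := by rw [show Complex.sinh u = (Complex.exp u - Complex.exp (-u))/2 from rfl, hwinv]
  have hcoshne : w + w⁻¹ ≠ 0 := by
    intro h0; apply h; rw [hcosh, h0, zero_div]
  have hw21 : w*w + 1 ≠ 0 := by
    intro h0; apply hcoshne
    have : w * (w + w⁻¹) = w*w + 1 := by
      rw [mul_add, mul_inv_cancel₀ hwne]
    rcases mul_eq_zero.mp (this.trans h0) with h1 | h1
    · exact absurd h1 hwne
    · exact h1
  set s : ℂ := 1/2 + I*x/(2*π*ρ) with hsdef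
  have hs : s - 1/2 ≠ 0 := by
    rw [hsdef]
    simp only [add_sub_cancel_left]
    apply div_ne_zero (mul_ne_zero I_ne_zero hx)
    exact mul_ne_zero (mul_ne_zero two_ne_zero hπ) hρ
  have hE2 : Complex.exp (-(2*π*I*s)) = -(w*w) := by
    have harg : -(2*(π:ℂ)*I*s) = u + u + (-(π*I)) := by
      rw [hsdef, hu]
      field_simp
      linear_combination (-2*x) * Complex.I_mul_I
    rw [harg, Complex.exp_add, Complex.exp_add, Complex.exp_neg, Complex.exp_pi_mul_I, ← hw]
    field_simp
  have hE : Complex.exp (-(2*π*I*s)) ≠ 1 := by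
    rw [hE2]
    intro h1
    apply hw21
    linear_combination -h1
  have hks := keySum s hs hE
  have hsum2 := hks.div_const (4*π^2*ρ^2)
  have hfeq : (fun p : ℤ => (1/(((p:ℂ)+1/2)*((p:ℂ)+s)))/(4*π^2*ρ^2))
      = (fun p : ℤ =>
        1 / ((2 * (π : ℂ) * ρ * ((p : ℂ) + 1 / 2) + I * x) *
          ((2 * (π : ℂ) * ρ * ((p : ℂ) + 1 / 2) + I * x) - I * x))) := by
    funext p
    have hden : (2 * (π : ℂ) * ρ * ((p : ℂ) + 1 / 2) + I * x) *
          ((2 * (π : ℂ) * ρ * ((p : ℂ) + 1 / 2) + I * x) - I * x)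
        = (((p:ℂ)+1/2)*((p:ℂ)+s)) * (4*π^2*ρ^2) := by
      rw [hsdef]
      linear_combination (-2*(π:ℂ)*ρ*I*x*((p:ℂ)+1/2)*((π:ℂ)*(π:ℂ)⁻¹)) * (mul_inv_cancel₀ hρ)
        + (-2*(π:ℂ)*ρ*I*x*((p:ℂ)+1/2)) * (mul_inv_cancel₀ hπ)
    rw [div_div, hden]
  rw [hfeq] at hsum2
  have h4 : (4:ℂ)*(π:ℂ)^2*ρ^2 ≠ 0 :=
    mul_ne_zero (mul_ne_zero (by norm_num) (pow_ne_zero 2 hπ)) (pow_ne_zero 2 hρ)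
  have h2ρx : (2:ℂ)*ρ*x ≠ 0 := mul_ne_zero (mul_ne_zero two_ne_zero hρ) hx
  have hval : ((π:ℂ)*I/(s-1/2) * (Complex.exp (-(2*π*I*s)) + 1)/(Complex.exp (-(2*π*I*s)) - 1))/(4*π^2*ρ^2)
      = Complex.tanh u / (2*ρ*x) := by
    have htanh : Complex.tanh u = (w*w - 1)/(w*w + 1) := by
      rw [Complex.tanh_eq_sinh_div_cosh, hsinh, hcosh,
        div_eq_div_iff (div_ne_zero hcoshne two_ne_zero) hw21]
      linear_combination (-w) * (mul_inv_cancel₀ hwne)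
    have hsd : (π:ℂ)*I/(s-1/2) = 2*π^2*ρ/x := by
      rw [div_eq_div_iff hs hx, hsdef]
      linear_combination (-(π:ℂ)*I*x*((π:ℂ)*(π:ℂ)⁻¹)) * (mul_inv_cancel₀ hρ)
        + (-(π:ℂ)*I*x) * (mul_inv_cancel₀ hπ)
    rw [hE2, htanh, hsd]
    rw [show (-(w*w) + 1 : ℂ) = -(w*w - 1) from by ring]
    rw [show (-(w*w) - 1 : ℂ) = -(w*w + 1) from by ring]
    rw [mul_neg, neg_div, div_neg, neg_neg, div_div, div_div,
      div_eq_div_iff (mul_ne_zero hw21 h4) (mul_ne_zero hw21 h2ρx)]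
    linear_combination ((4:ℂ)*(π:ℂ)^2*ρ^2*(w*w-1)*(w*w+1)) * (mul_inv_cancel₀ hx)
  rw [← hval]
  exact hsum2
end

section
/- With ρ as above (Re(ρ) < 0, Im(ρ) = N/(2π) with N a positive even integer), every zero z = (2p+1)πρ + i(2l+n) − r of B with Im(z) ≤ 0 is also a zero of A; explicitly, z can be rewritten as z = (2p+1)π·conj(ρ) − i(2m+n) − r with m = −(pN + N/2 + l + n) ∈ ℤ≥0. Consequently the quotient t ↦ A(t)/B(t) extends holomorphically to the open lower half-plane. -/
/-!
With `q = e^{2/ρ}` (so `‖q‖ < 1` as `Re ρ < 0`) and `u(t) = e^{(n + i(t+r))/ρ}`,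
`B t = ∏ₖ (1 + qᵏ u(t))`, and likewise for `A` with `conj ρ`. Such a product is entire, vanishes
exactly where one of its factors does, and, the `qᵏ` being distinct, all its zeros are simple.
A zero of a factor of `B` is a point `z = (2p+1)πρ + i(2l+n) − r`; when `Im z ≤ 0`, the relation
`π(ρ − conj ρ) = iN` rewrites `z` as a zero of the factor of index `m` of `A`. So at a zero `t₀`
of `B` in the lower half-plane, near `t₀` the quotient `A/B` equals the ratio of the slopes
`dslope A t₀ / dslope B t₀`, which is holomorphic since `dslope B t₀ t₀ = B'(t₀) ≠ 0`.
-/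

open Complex Function Topology
open scoped Real

section OneAddMul

variable {a : ℕ → ℂ}

theorem differentiable_tprod_one_add_mul (ha : Summable (‖a ·‖)) :
    Differentiable ℂ (fun u ↦ ∏' k, (1 + a k * u)) := by
  intro u₀
  set R := ‖u₀‖ + 1
  have hprod : HasProdLocallyUniformlyOn (fun k u ↦ 1 + a k * u)
      (fun u ↦ ∏' k, (1 + a k * u)) (Metric.ball 0 R) := by
    refine Summable.hasProdLocallyUniformlyOn_one_add (f := fun k u ↦ a k * u)
      Metric.isOpen_ball (ha.mul_right R) (.of_forall fun k u hu ↦ ?_) fun k ↦ by fun_prop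
    rw [norm_mul]
    exact mul_le_mul_of_nonneg_left (by simpa using (Metric.mem_ball.mp hu).le) (norm_nonneg _)
  refine (hprod.differentiableOn (.of_forall fun s ↦ ?_) Metric.isOpen_ball).differentiableAt
    (Metric.isOpen_ball.mem_nhds (by simp [R]))
  simpa [Finset.prod_fn] using DifferentiableOn.finsetProd (fun _ _ ↦ by fun_prop)

theorem tprod_one_add_mul_eq_zero_iff (ha : Summable (‖a ·‖)) {u : ℂ} :
    ∏' k, (1 + a k * u) = 0 ↔ ∃ k, 1 + a k * u = 0 := by
  refine ⟨fun h ↦ ?_, tprod_of_exists_eq_zero⟩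
  by_contra! hne
  exact tprod_one_add_ne_zero_of_summable hne (by simpa [norm_mul] using ha.mul_right ‖u‖) h

theorem summable_norm_update_zero (ha : Summable (‖a ·‖)) (k₀ : ℕ) :
    Summable (‖update a k₀ 0 ·‖) :=
  ha.of_nonneg_of_le (fun _ ↦ norm_nonneg _) fun k ↦ by
    rcases eq_or_ne k k₀ with rfl | hk <;> simp [*]

theorem tprod_one_add_mul_eq_mul_tprod_update (ha : Summable (‖a ·‖)) (k₀ : ℕ) (u : ℂ) :
    ∏' k, (1 + a k * u) = (1 + a k₀ * u) * ∏' k, (1 + update a k₀ 0 k * u) := by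
  have hupd : ∀ k, ite (k = k₀) 1 (1 + a k * u) = 1 + update a k₀ 0 k * u := fun k ↦ by
    rcases eq_or_ne k k₀ with rfl | hk <;> simp [*]
  rw [Multipliable.tprod_eq_mul_tprod_ite' (L := .unconditional ℕ) k₀, tprod_congr hupd]
  convert multipliable_one_add_of_summable (f := fun k ↦ update a k₀ 0 k * u)
    (by simpa using (summable_norm_update_zero ha k₀).mul_right ‖u‖) using 1
  ext k
  rw [← hupd, update_apply]

theorem deriv_tprod_one_add_mul_ne_zero (ha : Summable (‖a ·‖)) (hinj : Injective a) {u₀ : ℂ}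
    (h₀ : ∏' k, (1 + a k * u₀) = 0) : deriv (fun u ↦ ∏' k, (1 + a k * u)) u₀ ≠ 0 := by
  obtain ⟨k₀, hk₀⟩ := (tprod_one_add_mul_eq_zero_iff ha).mp h₀
  have hrest : ∏' k, (1 + update a k₀ 0 k * u₀) ≠ 0 := by
    refine tprod_one_add_ne_zero_of_summable (fun k hk ↦ ?_)
      (by simpa using (summable_norm_update_zero ha k₀).mul_right ‖u₀‖)
    rcases eq_or_ne k k₀ with rfl | hne
    · simp at hk
    · rw [update_of_ne hne] at hk
      have hu₀ : u₀ ≠ 0 := by rintro rfl; simp at hk₀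
      exact hne (hinj (mul_right_cancel₀ hu₀ (by linear_combination hk - hk₀)))
  have hderiv := ((hasDerivAt_id u₀).const_mul (a k₀) |>.const_add 1).fun_mul
    (differentiable_tprod_one_add_mul (summable_norm_update_zero ha k₀) u₀).hasDerivAt
  rw [funext (tprod_one_add_mul_eq_mul_tprod_update ha k₀)]
  simp only [id, mul_one, hk₀, zero_mul, add_zero] at hderiv
  rw [hderiv.deriv]
  exact mul_ne_zero (by rintro h; simp [h] at hk₀) hrest

end OneAddMul

theorem exists_differentiableOn_eq_div {f g : ℂ → ℂ} {U : Set ℂ} (hU : IsOpen U)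
    (hf : DifferentiableOn ℂ f U) (hg : DifferentiableOn ℂ g U)
    (hzero : ∀ x ∈ U, g x = 0 → f x = 0 ∧ deriv g x ≠ 0) :
    ∃ h : ℂ → ℂ, DifferentiableOn ℂ h U ∧ ∀ x ∈ U, g x ≠ 0 → h x = f x / g x := by
  classical
  refine ⟨fun x ↦ if g x = 0 then deriv f x / deriv g x else f x / g x, fun x hx ↦ ?_,
    fun x _ hgx ↦ if_neg hgx⟩
  have hUx : U ∈ 𝓝 x := hU.mem_nhds hx
  refine DifferentiableAt.differentiableWithinAt ?_
  by_cases hgx : g x = 0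
  · obtain ⟨hfx, hg'x⟩ := hzero x hx hgx
    have hdf := ((differentiableOn_dslope hUx).mpr hf).differentiableAt hUx
    have hdg := ((differentiableOn_dslope hUx).mpr hg).differentiableAt hUx
    have hdgx : dslope g x x ≠ 0 := by rwa [dslope_same]
    refine (hdf.div hdg hdgx).congr_of_eventuallyEq ?_
    filter_upwards [hdg.continuousAt.eventually_ne hdgx] with y hy
    rcases eq_or_ne y x with rfl | hyx
    · simp [hgx, dslope_same]
    · have hfy := sub_smul_dslope_of_zero hfx y
      have hgy := sub_smul_dslope_of_zero hgx y
      rw [smul_eq_mul] at hfy hgy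
      rw [if_neg (hgy ▸ mul_ne_zero (sub_ne_zero.mpr hyx) hy), ← hfy, ← hgy,
        mul_div_mul_left _ _ (sub_ne_zero.mpr hyx)]
      rfl
  · refine ((hf.differentiableAt hUx).div (hg.differentiableAt hUx) hgx).congr_of_eventuallyEq ?_
    filter_upwards [(hg.differentiableAt hUx).continuousAt.eventually_ne hgx] with y hy
    exact if_neg hy

theorem exp_eq_neg_one_iff {z : ℂ} : cexp z = -1 ↔ ∃ p : ℤ, z = (2 * p + 1) * π * I := by
  rw [← exp_pi_mul_I, exp_eq_exp_iff_exists_int]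
  exact exists_congr fun p ↦ by ring_nf

/-- The `q`-Pochhammer symbol `(-e^{w/c}; e^{2/c})_∞`. -/
noncomputable def expProd (c w : ℂ) : ℂ := ∏' k : ℕ, (1 + cexp ((2 * k + w) / c))

section ExpProd

variable {c : ℂ}

theorem expProd_eq_tprod (c w : ℂ) :
    expProd c w = ∏' k : ℕ, (1 + cexp (2 / c) ^ k * cexp (w / c)) :=
  tprod_congr fun k ↦ by rw [← exp_nat_mul, ← exp_add]; ring_nf

theorem norm_exp_two_div_lt_one (hc : c.re < 0) : ‖cexp (2 / c)‖ < 1 := by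
  rw [norm_exp, Real.exp_lt_one_iff, div_re]
  have : 0 < normSq c := normSq_pos.mpr (by rintro rfl; simp at hc)
  simp only [re_ofNat, im_ofNat, zero_mul, zero_div, add_zero]
  exact div_neg_of_neg_of_pos (by linarith) this

theorem summable_norm_exp_two_div_pow (hc : c.re < 0) : Summable (‖cexp (2 / c) ^ ·‖) := by
  simpa [norm_pow] using summable_geometric_of_lt_one (norm_nonneg _) (norm_exp_two_div_lt_one hc)

theorem injective_exp_two_div_pow (hc : c.re < 0) : Injective (cexp (2 / c) ^ ·) := fun i j h ↦
  pow_right_injective₀ (norm_pos_iff.mpr (exp_ne_zero _)) (norm_exp_two_div_lt_one hc).ne <| by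
    simpa only [norm_pow] using congrArg norm h

theorem differentiable_expProd (hc : c.re < 0) : Differentiable ℂ (expProd c) := by
  rw [funext (expProd_eq_tprod c)]
  exact (differentiable_tprod_one_add_mul (summable_norm_exp_two_div_pow hc)).comp
    (by fun_prop : Differentiable ℂ fun w ↦ cexp (w / c))

theorem expProd_eq_zero_iff (hc : c.re < 0) {w : ℂ} :
    expProd c w = 0 ↔ ∃ (k : ℕ) (p : ℤ), 2 * k + w = (2 * p + 1) * π * I * c := by
  have hc0 : c ≠ 0 := by rintro rfl; simp at hc
  rw [expProd_eq_tprod, tprod_one_add_mul_eq_zero_iff (summable_norm_exp_two_div_pow hc)]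
  refine exists_congr fun k ↦ ?_
  rw [← exp_nat_mul, ← exp_add, add_eq_zero_iff_eq_neg', exp_eq_neg_one_iff]
  refine exists_congr fun p ↦ ?_
  rw [← div_eq_iff hc0]
  ring_nf

theorem deriv_expProd_ne_zero (hc : c.re < 0) {w : ℂ} (h : expProd c w = 0) :
    deriv (expProd c) w ≠ 0 := by
  have hc0 : c ≠ 0 := by rintro rfl; simp at hc
  rw [expProd_eq_tprod] at h
  have hP := (differentiable_tprod_one_add_mul (summable_norm_exp_two_div_pow hc)
    (cexp (w / c))).hasDerivAt
  have hu : HasDerivAt (fun w ↦ cexp (w / c)) (cexp (w / c) * (1 / c)) w :=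
    ((hasDerivAt_id w).div_const c).cexp
  rw [((hP.comp w hu).congr_of_eventuallyEq (.of_forall (expProd_eq_tprod c))).deriv]
  exact mul_ne_zero (deriv_tprod_one_add_mul_ne_zero (summable_norm_exp_two_div_pow hc)
    (injective_exp_two_div_pow hc) h) (mul_ne_zero (exp_ne_zero _) (one_div_ne_zero hc0))

end ExpProd

theorem nonneg_and_eq_conj_form_of_im_nonpos {ρ : ℂ} {N : ℕ} (hN : Even N)
    (him : ρ.im = N / (2 * π)) {n p l : ℤ} (hl : 0 ≤ l) (r : ℝ)
    (hz : ((2 * (p : ℂ) + 1) * π * ρ + I * (2 * (l : ℂ) + n) - r).im ≤ 0) :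
    0 ≤ -(p * (N : ℤ) + (N : ℤ) / 2 + l + n) ∧
      (2 * (p : ℂ) + 1) * π * ρ + I * (2 * (l : ℂ) + n) - r =
        (2 * (p : ℂ) + 1) * π * star ρ -
          I * (2 * ((-(p * (N : ℤ) + (N : ℤ) / 2 + l + n) : ℤ) : ℂ) + n) - r := by
  obtain ⟨k, rfl⟩ := hN
  have hhalf : ((k + k : ℕ) : ℤ) / 2 = k := by omega
  have hπim : π * ρ.im = k := by
    rw [him]; push_cast; field_simp [Real.pi_ne_zero]; ring
  have hconj : (π : ℂ) * (ρ - star ρ) = 2 * k * I := by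
    rw [show star ρ = (starRingEnd ℂ) ρ from rfl, sub_conj, ← mul_assoc, ← ofReal_mul,
      mul_left_comm, hπim]
    push_cast; ring
  rw [hhalf]
  constructor
  · have hzim : ((2 * (p : ℂ) + 1) * π * ρ + I * (2 * (l : ℂ) + n) - r).im =
        (2 * p + 1) * k + (2 * l + n) := by
      simp [← hπim, mul_assoc]
    rw [hzim] at hz
    have : (2 * p + 1) * k + (2 * l + n) ≤ 0 := by exact_mod_cast hz
    push_cast; linarith
  · push_cast
    linear_combination (2 * (p : ℂ) + 1) * hconj

theorem expProd_conj_eq_zero_of_expProd_eq_zero {ρ : ℂ} {N : ℕ} (hN : Even N) (hre : ρ.re < 0)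
    (him : ρ.im = N / (2 * π)) (n : ℤ) (r : ℝ) {t : ℂ} (ht : t.im ≤ 0)
    (h : expProd ρ (n + I * (t + r)) = 0) : expProd (star ρ) (n - I * (t + r)) = 0 := by
  obtain ⟨k, p, hkp⟩ := (expProd_eq_zero_iff hre).mp h
  have ht_eq : t = (2 * (p : ℂ) + 1) * π * ρ + I * (2 * ((k : ℤ) : ℂ) + n) - r := by
    push_cast
    linear_combination (-I) * hkp + (t + r - (2 * p + 1) * π * ρ) * I_sq
  rw [ht_eq] at ht
  obtain ⟨hm, ht_conj⟩ := nonneg_and_eq_conj_form_of_im_nonpos hN him (Int.natCast_nonneg k) r ht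
  set m := -(p * (N : ℤ) + (N : ℤ) / 2 + k + n)
  refine (expProd_eq_zero_iff (by simpa using hre)).mpr ⟨m.toNat, -p - 1, ?_⟩
  rw [ht_eq, ht_conj, show ((m.toNat : ℕ) : ℂ) = (m : ℂ) by exact_mod_cast Int.toNat_of_nonneg hm]
  push_cast
  linear_combination (2 * (m : ℂ) + n) * I_sq

theorem stmt14_general (ρ : ℂ) (N : ℕ) (hN : Even N) (hre : ρ.re < 0)
    (him : ρ.im = N / (2 * π)) (n : ℤ) (r : ℝ) (A B : ℂ → ℂ)
    (hA : ∀ t : ℂ,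
      A t = ∏' k : ℕ, (1 + Complex.exp ((2 * (k : ℂ) + n - I * (t + r)) / star ρ)))
    (hB : ∀ t : ℂ,
      B t = ∏' k : ℕ, (1 + Complex.exp ((2 * (k : ℂ) + n + I * (t + r)) / ρ))) :
    (∀ (p l : ℤ), 0 ≤ l → ∀ z : ℂ,
      z = (2 * (p : ℂ) + 1) * (π : ℂ) * ρ + I * (2 * (l : ℂ) + n) - r → z.im ≤ 0 →
      (0 : ℤ) ≤ -(p * (N : ℤ) + (N : ℤ) / 2 + l + n) ∧
      z = (2 * (p : ℂ) + 1) * (π : ℂ) * star ρ -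
            I * (2 * ((-(p * (N : ℤ) + (N : ℤ) / 2 + l + n) : ℤ) : ℂ) + n) - r) ∧
    (∃ g : ℂ → ℂ, DifferentiableOn ℂ g {t : ℂ | t.im < 0} ∧
      ∀ t : ℂ, t.im < 0 → B t ≠ 0 → g t = A t / B t) := by
  obtain rfl : A = fun t ↦ expProd (star ρ) (n - I * (t + r)) :=
    funext fun t ↦ by simp only [hA, expProd, add_sub_assoc]
  obtain rfl : B = fun t ↦ expProd ρ (n + I * (t + r)) :=
    funext fun t ↦ by simp only [hB, expProd, add_assoc]
  have hre' : (star ρ).re < 0 := by simpa using hre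
  refine ⟨fun p l hl z hz hzim ↦ hz ▸ nonneg_and_eq_conj_form_of_im_nonpos hN him hl r (hz ▸ hzim),
    exists_differentiableOn_eq_div (isOpen_lt continuous_im continuous_const) ?_ ?_
      fun t ht hBt ↦ ⟨?_, ?_⟩⟩
  · exact ((differentiable_expProd hre').comp (by fun_prop)).differentiableOn
  · exact ((differentiable_expProd hre).comp (by fun_prop)).differentiableOn
  · exact expProd_conj_eq_zero_of_expProd_eq_zero hN hre him n r ht.le hBt
  · have hinner : HasDerivAt (fun t : ℂ ↦ n + I * (t + r)) I t := by
      simpa using (((hasDerivAt_id t).add_const (r : ℂ)).const_mul I).const_add (n : ℂ)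
    rw [((differentiable_expProd hre _).hasDerivAt.comp t hinner).deriv
      (f := fun t : ℂ ↦ expProd ρ (n + I * (t + r)))]
    exact mul_ne_zero (deriv_expProd_ne_zero hre hBt) I_ne_zero

/-- Every zero `z = (2p+1)πρ + i(2l+n) − r` of `B` with `Im z ≤ 0` is also a zero
of `A`: it can be rewritten as `z = (2p+1)π conj ρ − i(2m+n) − r` with
`m = −(pN + N/2 + l + n) ∈ ℤ≥0`.  Consequently `A/B` extends holomorphically to
the open lower half-plane. -/
theorem stmt14 (ρ : ℂ) (N : ℕ) (hN : Even N) (hN0 : 0 < N) (hre : ρ.re < 0)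
    (him : ρ.im = N / (2 * π)) (n : ℤ) (r : ℝ) (A B : ℂ → ℂ)
    (hA : ∀ t : ℂ,
      A t = ∏' k : ℕ, (1 + Complex.exp ((2 * (k : ℂ) + n - I * (t + r)) / star ρ)))
    (hB : ∀ t : ℂ,
      B t = ∏' k : ℕ, (1 + Complex.exp ((2 * (k : ℂ) + n + I * (t + r)) / ρ))) :
    (∀ (p l : ℤ), 0 ≤ l → ∀ z : ℂ,
      z = (2 * (p : ℂ) + 1) * (π : ℂ) * ρ + I * (2 * (l : ℂ) + n) - r → z.im ≤ 0 →
      (0 : ℤ) ≤ -(p * (N : ℤ) + (N : ℤ) / 2 + l + n) ∧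
      z = (2 * (p : ℂ) + 1) * (π : ℂ) * star ρ -
            I * (2 * ((-(p * (N : ℤ) + (N : ℤ) / 2 + l + n) : ℤ) : ℂ) + n) - r) ∧
    (∃ g : ℂ → ℂ, DifferentiableOn ℂ g {t : ℂ | t.im < 0} ∧
      ∀ t : ℂ, t.im < 0 → B t ≠ 0 → g t = A t / B t) :=
  stmt14_general ρ N hN hre him n r A B hA hB
end
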